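/- If l is a nondecreasing word of length n representing the positive braid P ∈ B₃⁺, then there exists a nondecreasing word l′ of length n representing the right complement P*; in particular P* ∈ B₃⁺ and e(P*) = e(P). -/

import Mathlib

/-!
The right complement is multiplicative up to a twist, `(x y)* = y* · τ^{e(y)}(x*)`, and
`a_i* = a_{i+2}`. Hence the complement of the positive word `a_{i₁} ⋯ a_{i_ℓ}` is the positive
word with letters `i_ℓ + 2, i_{ℓ-1} + 3, …, i₁ + ℓ + 1`: the original word read backwards, each
letter shifted by `τ` once more than the previous one. Consecutive letters of the complement
differ by `1 - (i_{j+1} - i_j)`, which lies in `{0, 1}` because the original word is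
nondecreasing.
-/

namespace Braid

/-- Relations of the dual (band-generator) presentation of the 3-braid group:
`a (i+1) * a i = a (i+2) * a (i+1)` for all `i : ZMod 3`. -/
def braidRels : Set (FreeGroup (ZMod 3)) :=
  { r | ∃ i : ZMod 3,
      r = FreeGroup.of (i + 1) * FreeGroup.of i *
          (FreeGroup.of (i + 2) * FreeGroup.of (i + 1))⁻¹ }

/-- The 3-braid group with the band-generator presentation. -/
abbrev B3 := PresentedGroup braidRels

/-- The band generators `a i`, `i : ZMod 3`. -/
def a (i : ZMod 3) : B3 := PresentedGroup.of i

/-- The fundamental element `δ = a₂ * a₁`. -/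
def δ : B3 := a 2 * a 1

/-- The submonoid of positive braids. -/
def Pos : Submonoid B3 := Submonoid.closure (Set.range a)

/-- The exponent-sum homomorphism, sending each generator to `1 : ℤ`. -/
def eHom : B3 →* Multiplicative ℤ :=
  PresentedGroup.toGroup (f := fun _ => Multiplicative.ofAdd (1 : ℤ)) (by
    rintro r ⟨i, rfl⟩
    simp only [map_mul, map_inv, FreeGroup.lift_apply_of]
    group)

/-- The exponent sum (letter length on positive braids) as an integer. -/
def elen (x : B3) : ℤ := Multiplicative.toAdd (eHom x)

/-- The right complement `X* = X⁻¹ * δ^{e(X)}`. -/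
def rc (X : B3) : B3 := X⁻¹ * δ ^ elen X

/-- The `n`-th power of the rotation automorphism `τ`: `τ^n (x) = δ^{-n} * x * δ^n`. -/
def tauPow (n : ℤ) (x : B3) : B3 := δ ^ (-n) * x * δ ^ n

/-- The positive braid represented by a list of generator indices. -/
def wordProd (l : List (ZMod 3)) : B3 := (l.map a).prod

/-- A word is nondecreasing if each letter index is the previous one or the previous one
plus `1` (mod 3). -/
def NDWord (l : List (ZMod 3)) : Prop :=
  l.Chain' (fun x y => y = x ∨ y = x + 1)

/-- The syllable number of a word: the number of maximal constant blocks. -/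
def syl : List (ZMod 3) → ℕ
  | [] => 0
  | [_] => 1
  | x :: y :: t => (if x = y then 0 else 1) + syl (y :: t)

/-- The permutations underlying the band generators. -/
def perm3 (i : ZMod 3) : Equiv.Perm (Fin 3) :=
  if i = 0 then Equiv.swap 0 2 else if i = 1 then Equiv.swap 0 1 else Equiv.swap 1 2

lemma perm3_rel : ∀ i : ZMod 3,
    perm3 (i + 1) * perm3 i * (perm3 (i + 2) * perm3 (i + 1))⁻¹ = 1 := by decide

/-- The homomorphism to the symmetric group on 3 letters (underlying permutation). -/
def permOf : B3 →* Equiv.Perm (Fin 3) :=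
  PresentedGroup.toGroup (f := perm3) (by
    rintro r ⟨i, rfl⟩
    simp only [map_mul, map_inv, FreeGroup.lift_apply_of]
    exact perm3_rel i)

/-- The set of band generators and their inverses. -/
def genSet : Set B3 := Set.range a ∪ Set.range (fun i => (a i)⁻¹)

/-- The band-generator word length of a 3-braid. -/
noncomputable def wordLen (x : B3) : ℕ :=
  sInf { n | ∃ s : List B3, s.length = n ∧ (∀ g ∈ s, g ∈ genSet) ∧ s.prod = x }

/-- The minimal band-generator word length in the conjugacy class. -/
noncomputable def minConjLen (x : B3) : ℕ :=
  sInf { n | ∃ y, IsConj x y ∧ wordLen y = n }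

/-- `α` is a summit element with summit exponent `u` if `δ^{-u} * α` is positive and `u` is
the maximal such exponent over the conjugacy class. -/
def IsSummit (α : B3) (u : ℤ) : Prop :=
  δ ^ (-u) * α ∈ Pos ∧ ∀ β : B3, IsConj α β → ∀ v : ℤ, δ ^ (-v) * β ∈ Pos → v ≤ u

lemma a_succ_mul_a_eq (i : ZMod 3) : a (i + 1) * a i = a (i + 2) * a (i + 1) :=
  PresentedGroup.mk_eq_mk_of_mul_inv_mem ⟨i, rfl⟩

lemma a_succ_mul_a (i : ZMod 3) : a (i + 1) * a i = δ := by
  fin_cases i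
  · exact a_succ_mul_a_eq 0
  · rfl
  · exact (a_succ_mul_a_eq 1).symm

lemma a_mul_a_add_two (i : ZMod 3) : a i * a (i + 2) = δ := by
  simpa [show i + 2 + 1 = i by grind] using a_succ_mul_a (i + 2)

lemma inv_a_mul_delta (i : ZMod 3) : (a i)⁻¹ * δ = a (i + 2) := by
  rw [← a_mul_a_add_two i, inv_mul_cancel_left]

lemma a_mul_delta (i : ZMod 3) : a i * δ = δ * a (i + 1) :=
  calc a i * δ = a i * (a (i + 2) * a (i + 1)) := by
        rw [← a_succ_mul_a (i + 1), show i + 1 + 1 = i + 2 by grind]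
    _ = δ * a (i + 1) := by rw [← mul_assoc, a_mul_a_add_two]

lemma a_mul_delta_pow (i : ZMod 3) (n : ℕ) : a i * δ ^ n = δ ^ n * a (i + n) := by
  induction n generalizing i with
  | zero => simp
  | succ n ih =>
    rw [pow_succ', ← mul_assoc, a_mul_delta, mul_assoc, ih, ← mul_assoc, ← pow_succ',
      Nat.cast_succ, add_comm (n : ZMod 3), add_assoc]

lemma tauPow_natCast_a (n : ℕ) (i : ZMod 3) : tauPow n (a i) = a (i + n) := by
  rw [tauPow, zpow_neg, zpow_natCast, mul_assoc, a_mul_delta_pow, inv_mul_cancel_left]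

lemma elen_mul (x y : B3) : elen (x * y) = elen x + elen y := by
  simp [elen]

lemma elen_a (i : ZMod 3) : elen (a i) = 1 := by
  simp [elen, eHom, a]

lemma rc_mul (x y : B3) : rc (x * y) = rc y * tauPow (elen y) (rc x) := by
  simp only [rc, tauPow, elen_mul, zpow_add]
  group

lemma rc_a (i : ZMod 3) : rc (a i) = a (i + 2) := by
  rw [rc, elen_a, zpow_one, inv_a_mul_delta]

lemma wordProd_cons (i : ZMod 3) (l : List (ZMod 3)) : wordProd (i :: l) = a i * wordProd l := by
  simp [wordProd]

lemma wordProd_append (l₁ l₂ : List (ZMod 3)) :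
    wordProd (l₁ ++ l₂) = wordProd l₁ * wordProd l₂ := by
  simp [wordProd]

lemma wordProd_mem_Pos (l : List (ZMod 3)) : wordProd l ∈ Pos :=
  Submonoid.list_prod_mem _ fun _ hx ↦ by
    obtain ⟨i, -, rfl⟩ := List.mem_map.mp hx
    exact Submonoid.subset_closure ⟨i, rfl⟩

lemma elen_wordProd (l : List (ZMod 3)) : elen (wordProd l) = l.length := by
  induction l with
  | nil => simp [wordProd, elen]
  | cons i t ih => rw [wordProd_cons, elen_mul, elen_a, ih, List.length_cons]; push_cast; ring

def rcWord : List (ZMod 3) → List (ZMod 3)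
  | [] => []
  | i :: t => rcWord t ++ [i + 2 + t.length]

lemma length_rcWord (l : List (ZMod 3)) : (rcWord l).length = l.length := by
  induction l with
  | nil => rfl
  | cons i t ih => simp [rcWord, ih]

lemma wordProd_rcWord (l : List (ZMod 3)) : wordProd (rcWord l) = rc (wordProd l) := by
  induction l with
  | nil => simp [rcWord, wordProd, rc, elen]
  | cons i t ih =>
    rw [rcWord, wordProd_append, ih, wordProd_cons i, rc_mul, rc_a, elen_wordProd,
      tauPow_natCast_a]
    simp [wordProd]

lemma NDWord.rcWord {l : List (ZMod 3)} (hl : NDWord l) : NDWord (rcWord l) := by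
  induction l with
  | nil => exact List.isChain_nil
  | cons i t ih =>
    cases t with
    | nil => exact List.isChain_singleton _
    | cons j s =>
      refine List.isChain_append.mpr ⟨ih hl.tail, List.isChain_singleton _, ?_⟩
      simp only [Braid.rcWord, List.getLast?_append, List.getLast?_singleton, Option.some_or,
        List.head?_cons, Option.mem_def, Option.some.injEq, List.length_cons]
      rintro _ rfl _ rfl
      rcases hl.rel with rfl | rfl
      · right; push_cast; ring
      · left; push_cast; ring

/-- Lemma 2.2(v): if `P` is a nondecreasing positive word, then so is `P*`, with `|P*| = |P|`. -/
theorem rc_ndword (l : List (ZMod 3)) (hl : NDWord l) :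
    (∃ l' : List (ZMod 3), NDWord l' ∧ l'.length = l.length ∧
        wordProd l' = rc (wordProd l)) ∧
    rc (wordProd l) ∈ Pos ∧ elen (rc (wordProd l)) = elen (wordProd l) := by
  refine ⟨⟨rcWord l, hl.rcWord, length_rcWord l, wordProd_rcWord l⟩, ?_, ?_⟩
  · exact wordProd_rcWord l ▸ wordProd_mem_Pos _
  · rw [← wordProd_rcWord, elen_wordProd, elen_wordProd, length_rcWord]
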